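/- Let $2 \leq n \leq m$ with $m = pn$, let $u_1, \dots, u_n$ be the vertices of $P_n$ and $v_1, \dots, v_m$ the vertices of $P_m$ (regular polygons inscribed in the unit circle with geodesic metric). Then the correspondence $R = \bigcup_{i=1}^{n}\{(u_i, v_{pi-k}) : k = 0, \dots, p-1\}$ has distortion $\operatorname{dis} R \leq \frac{2(p-1)\pi}{pn}$. -/

import Mathlib

open Real

/-- Vertex set of the regular `n`-gon inscribed in the unit circle, modeled inside
`AddCircle (2π)` whose quotient metric is exactly the geodesic metric
`d(α,β) = min (|α-β|) (2π - |α-β|)`. -/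
noncomputable def Pvert (n : ℕ) : Set (AddCircle (2 * π)) :=
  Set.range fun j : Fin n => ((2 * π * j / n : ℝ) : AddCircle (2 * π))

instance (n : ℕ) : Finite (Pvert n) := by unfold Pvert; exact (Set.finite_range _).to_subtype

def IsCorr {X Y : Type*} (R : Set (X × Y)) : Prop :=
  (∀ x, ∃ y, (x, y) ∈ R) ∧ (∀ y, ∃ x, (x, y) ∈ R)

noncomputable def corrDis {X Y : Type*} [MetricSpace X] [MetricSpace Y]
    (R : Set (X × Y)) : ℝ :=
  sSup {r | ∃ p ∈ R, ∃ q ∈ R, r = |dist p.1 q.1 - dist p.2 q.2|}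

noncomputable def ghCorrDist (X Y : Type*) [MetricSpace X] [MetricSpace Y] : ℝ :=
  (1 / 2) * sInf {r | ∃ R : Set (X × Y), IsCorr R ∧ r = corrDis R}

/-!
Lift every point of the correspondence to the reals: the pair `(uᵢ, v_{pi-k})` lifts to
`2πi/n` and `2π(pi - k)/(pn)`, which differ by `2πk/(pn)`. The circle distance between two
points is at most the absolute value of any real lift of their difference, so for two pairs the
two distances differ by at most `2π|k - k'|/(pn) ≤ 2π(p - 1)/(pn)`. Surjectivity onto `P_{pn}`
holds because every `j < pn` is congruent to some `pi - k` modulo `pn`.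
-/

namespace AddCircle

theorem norm_coe_le_abs (T x : ℝ) : ‖(x : AddCircle T)‖ ≤ |x| := by
  simpa using QuotientAddGroup.norm_mk_le_norm (S := AddSubgroup.zmultiples T) (m := x)

theorem abs_dist_sub_dist_le (T a b c d : ℝ) :
    |dist (a : AddCircle T) b - dist (c : AddCircle T) d| ≤ |(a - b) - (c - d)| := by
  simp only [dist_eq_norm, ← coe_sub]
  exact (abs_norm_sub_norm_le _ _).trans (norm_coe_le_abs T _)

theorem coe_mul_add_intCast_mul_div (T N x : ℝ) (m : ℤ) (hN : N ≠ 0) :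
    ((T * (x + m * N) / N : ℝ) : AddCircle T) = ((T * x / N : ℝ) : AddCircle T) := by
  rw [show T * (x + m * N) / N = T * x / N + m • T by rw [zsmul_eq_mul]; field_simp,
    coe_add, coe_zsmul, coe_period, smul_zero, add_zero]

end AddCircle

theorem Nat.exists_eq_mul_sub_add_mul {p n j : ℕ} (hj : j < p * n) :
    ∃ i < n, ∃ k < p, ∃ m : ℤ, (j : ℤ) = p * i - k + m * (p * n) := by
  obtain ⟨hp, hn⟩ := CanonicallyOrderedAdd.mul_pos.mp (j.zero_le.trans_lt hj)
  -- `I = ⌈j / p⌉`; when `I = n` the index wraps around to `i = 0`.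
  obtain ⟨I, hjI, hIj⟩ : ∃ I, j ≤ p * I ∧ p * I < j + p :=
    ⟨(j + p - 1) / p, by grind [Nat.div_add_mod (j + p - 1) p, Nat.mod_lt (j + p - 1) hp]⟩
  by_cases hI : I < n
  · exact ⟨I, hI, p * I - j, by omega, 0, by push_cast [Nat.cast_sub hjI]; ring⟩
  · have := Nat.mul_le_mul_left p (not_lt.1 hI)
    exact ⟨0, by omega, p * n - j, by omega, 1, by push_cast [Nat.cast_sub hj.le]; ring⟩

theorem Fin.abs_val_sub_val_le {p : ℕ} (k l : Fin p) : |(k : ℝ) - l| ≤ p - 1 := by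
  have hk : (k : ℝ) + 1 ≤ p := by exact_mod_cast k.2
  have hl : (l : ℝ) + 1 ≤ p := by exact_mod_cast l.2
  rw [abs_le]; constructor <;> linarith [Nat.cast_nonneg (α := ℝ) k, Nat.cast_nonneg (α := ℝ) l]

theorem abs_dist_sub_dist_refinement_le {n p : ℕ} (i i' : Fin n) (k k' : Fin p) :
    |dist ((2 * π * i / n : ℝ) : AddCircle (2 * π)) ((2 * π * i' / n : ℝ) : AddCircle (2 * π)) -
      dist ((2 * π * ((p : ℝ) * i - k) / (p * n) : ℝ) : AddCircle (2 * π))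
        ((2 * π * ((p : ℝ) * i' - k') / (p * n) : ℝ) : AddCircle (2 * π))| ≤
      2 * ((p : ℝ) - 1) * π / (p * n) := by
  have hn : (n : ℝ) ≠ 0 := by have := i.pos; positivity
  have hp : (p : ℝ) ≠ 0 := by have := k.pos; positivity
  calc _ ≤ _ := AddCircle.abs_dist_sub_dist_le _ _ _ _ _
    _ = |(k : ℝ) - k'| * (2 * π / (p * n)) := by
        rw [← abs_of_pos (by positivity : 0 < 2 * π / (p * n)), ← abs_mul]
        congr 1
        field_simp
        ring
    _ ≤ (p - 1) * (2 * π / (p * n)) := by gcongr; exact Fin.abs_val_sub_val_le k k'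
    _ = _ := by ring

theorem corrDis_le {X Y : Type*} [MetricSpace X] [MetricSpace Y] {R : Set (X × Y)} {c : ℝ}
    (hc : 0 ≤ c) (h : ∀ x ∈ R, ∀ y ∈ R, |dist x.1 y.1 - dist x.2 y.2| ≤ c) : corrDis R ≤ c :=
  Real.sSup_le (by rintro _ ⟨x, hx, y, hy, rfl⟩; exact h x hx y hy) hc

theorem stmt5_general (n p : ℕ) (hp : 1 ≤ p) :
    let R : Set (AddCircle (2 * π) × AddCircle (2 * π)) :=
      {q | ∃ i : Fin n, ∃ k : Fin p,
        q.1 = ((2 * π * i / n : ℝ) : AddCircle (2 * π)) ∧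
        q.2 = ((2 * π * ((p : ℝ) * i - k) / (p * n) : ℝ) : AddCircle (2 * π))}
    (∀ x ∈ Pvert n, ∃ y ∈ Pvert (p * n), (x, y) ∈ R) ∧
    (∀ y ∈ Pvert (p * n), ∃ x ∈ Pvert n, (x, y) ∈ R) ∧
    corrDis R ≤ 2 * ((p : ℝ) - 1) * π / (p * n) := by
  intro R
  refine ⟨?_, ?_, ?_⟩
  · rintro _ ⟨i, rfl⟩
    refine ⟨_, ⟨⟨p * i, Nat.mul_lt_mul_of_pos_left i.2 hp⟩, rfl⟩, i, ⟨0, hp⟩, rfl, ?_⟩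
    push_cast
    rw [sub_zero]
  · rintro _ ⟨j, rfl⟩
    obtain ⟨i, hi, k, hk, m, hj⟩ := Nat.exists_eq_mul_sub_add_mul j.2
    refine ⟨_, ⟨⟨i, hi⟩, rfl⟩, ⟨i, hi⟩, ⟨k, hk⟩, rfl, ?_⟩
    have hj' : (j : ℝ) = p * i - k + m * (p * n) := by exact_mod_cast hj
    simp only [hj', Nat.cast_mul]
    have hn : (n : ℝ) ≠ 0 := by norm_cast; omega
    exact AddCircle.coe_mul_add_intCast_mul_div _ _ _ _ (by positivity)
  · have hp1 : (1 : ℝ) ≤ p := by exact_mod_cast hp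
    refine corrDis_le (by positivity) ?_
    rintro ⟨_, _⟩ ⟨i, k, rfl, rfl⟩ ⟨_, _⟩ ⟨i', k', rfl, rfl⟩
    exact abs_dist_sub_dist_refinement_le i i' k k'

/-- The correspondence `R = ⋃ᵢ {(uᵢ, v_{pi-k}) : k = 0, …, p-1}` between `Pₙ` and `P_{pn}`
has distortion at most `2(p-1)π/(pn)`.  (Distances of points of `Pvert n`, `Pvert (p*n)`
are computed in the ambient circle, where they coincide with the subspace metric.) -/
theorem stmt5 (n p : ℕ) (hn : 2 ≤ n) (hp : 1 ≤ p) :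
    let R : Set (AddCircle (2 * π) × AddCircle (2 * π)) :=
      {q | ∃ i : Fin n, ∃ k : Fin p,
        q.1 = ((2 * π * i / n : ℝ) : AddCircle (2 * π)) ∧
        q.2 = ((2 * π * ((p : ℝ) * i - k) / (p * n) : ℝ) : AddCircle (2 * π))}
    (∀ x ∈ Pvert n, ∃ y ∈ Pvert (p * n), (x, y) ∈ R) ∧
    (∀ y ∈ Pvert (p * n), ∃ x ∈ Pvert n, (x, y) ∈ R) ∧
    corrDis R ≤ 2 * ((p : ℝ) - 1) * π / (p * n) :=
  stmt5_general n p hp
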